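/- arXiv:1410.6020 — 6 statements merged into one kernel-verified Lean document; each statement's English description precedes it below -/
import Mathlib

section
/- Let (Ω, 𝓕, P) be a probability space, let b, u : List ℕ → Ω → ℝ be (arbitrary) families of functions, and for each vaccination function α : ℝ → [0,1] define the random pruned tree kept_α(ω) ⊆ List ℕ pointwise from b(·)(ω) and u(·)(ω). Let f : Set (List ℕ) → [0,∞] be monotone with respect to set inclusion (S ⊆ S' implies f(S) ≤ f(S')). Then for all α, α' : ℝ → [0,1] with α ≼ α', the lower Lebesgue integrals satisfy ∫⁻ f(kept_{α'}(ω)) dP(ω) ≤ ∫⁻ f(kept_α(ω)) dP(ω). (This is the stochastic monotonicity of means, Theorem 1 of the paper, for functions monotonically decreasing with pruning.) -/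
open MeasureTheory
open scoped ENNReal

/-- Coupled pruning: the set of Ulam–Harris individuals surviving pruning by the
vaccination function `α`, given birth times `b` and marks `u`. -/
def kept (b u : List ℕ → ℝ) (α : ℝ → ℝ) : Set (List ℕ) :=
  {i : List ℕ | ∀ j : List ℕ, j ≠ [] → j <+: i → α (b j) < u j}

theorem kept_antitone (b u : List ℕ → ℝ) : Antitone (kept b u) :=
  fun _ _ hle _ hi j hj hprefix => (hle _).trans_lt (hi j hj hprefix)

theorem lintegral_kept_antitone_general {Ω : Type*} [MeasurableSpace Ω]
    (P : Measure Ω)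
    (b u : List ℕ → Ω → ℝ)
    (f : Set (List ℕ) → ℝ≥0∞) (hf : Monotone f)
    (α α' : ℝ → ℝ)
    (hle : ∀ t, α t ≤ α' t) :
    ∫⁻ ω, f (kept (fun i => b i ω) (fun i => u i ω) α') ∂P ≤
      ∫⁻ ω, f (kept (fun i => b i ω) (fun i => u i ω) α) ∂P :=
  lintegral_mono fun _ => hf (kept_antitone _ _ hle)

/-- Stochastic monotonicity of means (Theorem 1 of the paper): for a monotone
`f : Set (List ℕ) → [0,∞]` and vaccination functions `α ≼ α'`, the lower Lebesgue
integral of `f` applied to the random pruned tree is smaller for `α'` than for `α`. -/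
theorem lintegral_kept_antitone {Ω : Type*} [MeasurableSpace Ω]
    (P : Measure Ω) [IsProbabilityMeasure P]
    (b u : List ℕ → Ω → ℝ)
    (f : Set (List ℕ) → ℝ≥0∞) (hf : Monotone f)
    (α α' : ℝ → ℝ)
    (hα : ∀ t, α t ∈ Set.Icc (0 : ℝ) 1) (hα' : ∀ t, α' t ∈ Set.Icc (0 : ℝ) 1)
    (hle : ∀ t, α t ≤ α' t) :
    ∫⁻ ω, f (kept (fun i => b i ω) (fun i => u i ω) α') ∂P ≤
      ∫⁻ ω, f (kept (fun i => b i ω) (fun i => u i ω) α) ∂P :=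
  lintegral_kept_antitone_general P b u f hf α α' hle
end

section
/- Let v : ℝ → ℝ be nondecreasing and right-continuous, let p ∈ (0,1), suppose the set {x ≥ 0 : p ≤ v(x)} is nonempty, and set x_p = sInf {x ≥ 0 : p ≤ v(x)}. Let (v_n) be a sequence of nondecreasing right-continuous functions ℝ → ℝ such that v(x) ≤ v_n(x) for all n and all x, and such that sup_{x ∈ ℝ} |v_n(x) − v(x)| → 0 as n → ∞. Then for every n the set {x ≥ 0 : p ≤ v_n(x)} is nonempty, and the quantiles x_{n,p} = sInf {x ≥ 0 : p ≤ v_n(x)} satisfy x_{n,p} → x_p as n → ∞. -/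
/-!
Domination `v ≤ vₙ` enlarges the set `{x ≥ 0 : p ≤ vₙ x}`, so the quantiles of the `vₙ` lie below
that of `v`. Conversely, below the quantile `x_p` we have `v x < p`, hence `vₙ x < p` for large `n`,
and monotonicity of `vₙ` pushes its quantile above `x`.
-/

open Filter Topology

noncomputable def quantile (v : ℝ → ℝ) (p : ℝ) : ℝ :=
  sInf {x : ℝ | 0 ≤ x ∧ p ≤ v x}

lemma quantile_nonneg (v : ℝ → ℝ) (p : ℝ) : 0 ≤ quantile v p :=
  Real.sInf_nonneg fun _ hx => hx.1

lemma quantile_le_quantile_of_le {v w : ℝ → ℝ} {p : ℝ} (hvw : ∀ x, v x ≤ w x)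
    (hne : {x : ℝ | 0 ≤ x ∧ p ≤ v x}.Nonempty) : quantile w p ≤ quantile v p :=
  csInf_le_csInf ⟨0, fun _ hx => hx.1⟩ hne fun x hx => ⟨hx.1, hx.2.trans (hvw x)⟩

lemma lt_of_lt_quantile {v : ℝ → ℝ} {p x : ℝ} (hx₀ : 0 ≤ x) (hx : x < quantile v p) :
    v x < p := by
  by_contra! hpx
  have hbdd : BddBelow {x : ℝ | 0 ≤ x ∧ p ≤ v x} := ⟨0, fun _ hy => hy.1⟩
  exact (csInf_le hbdd ⟨hx₀, hpx⟩).not_gt hx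

lemma le_quantile_of_lt {w : ℝ → ℝ} {p x : ℝ} (hw : Monotone w)
    (hne : {x : ℝ | 0 ≤ x ∧ p ≤ w x}.Nonempty) (hx : w x < p) : x ≤ quantile w p :=
  le_csInf hne fun _ hy => (hw.reflect_lt (hx.trans_le hy.2)).le

lemma eventually_lt_quantile {ι : Type*} {l : Filter ι} {w : ι → ℝ → ℝ} {v : ℝ → ℝ} {p a : ℝ}
    (hw : ∀ i, Monotone (w i)) (hne : ∀ i, {x : ℝ | 0 ≤ x ∧ p ≤ w i x}.Nonempty)
    (hlim : ∀ x, Tendsto (fun i => w i x) l (𝓝 (v x))) (ha : a < quantile v p) :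
    ∀ᶠ i in l, a < quantile (w i) p := by
  rcases lt_or_ge a 0 with ha₀ | ha₀
  · exact .of_forall fun i => ha₀.trans_le (quantile_nonneg _ _)
  obtain ⟨c, hac, hc⟩ := exists_between ha
  filter_upwards [(hlim c).eventually_lt_const (lt_of_lt_quantile (ha₀.trans hac.le) hc)]
    with i hi
  exact hac.trans_le (le_quantile_of_lt (hw i) (hne i) hi)

theorem quantile_tendsto_of_dominating_general (v : ℝ → ℝ)
    (p : ℝ)
    (hne : {x : ℝ | 0 ≤ x ∧ p ≤ v x}.Nonempty)
    (vn : ℕ → ℝ → ℝ) (hmono' : ∀ n, Monotone (vn n))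
    (hle : ∀ n, ∀ x : ℝ, v x ≤ vn n x)
    (hunif : TendstoUniformly vn v atTop) :
    (∀ n, {x : ℝ | 0 ≤ x ∧ p ≤ vn n x}.Nonempty) ∧
      Tendsto (fun n => sInf {x : ℝ | 0 ≤ x ∧ p ≤ vn n x}) atTop
        (nhds (sInf {x : ℝ | 0 ≤ x ∧ p ≤ v x})) := by
  have hne' : ∀ n, {x : ℝ | 0 ≤ x ∧ p ≤ vn n x}.Nonempty := fun n =>
    hne.mono fun x hx => ⟨hx.1, hx.2.trans (hle n x)⟩
  refine ⟨hne', tendsto_order.2 ⟨fun a ha => ?_, fun b hb => ?_⟩⟩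
  · exact eventually_lt_quantile hmono' hne' hunif.tendsto_at ha
  · exact .of_forall fun n => (quantile_le_quantile_of_le (hle n) hne).trans_lt hb

/-- Quantile convergence (Theorem 4(b), case (i), of the paper): if `v` is a nondecreasing
right-continuous function, `p ∈ (0,1)`, the quantile set of `v` is nonempty, and `(vₙ)` is a
sequence of nondecreasing right-continuous functions dominating `v` pointwise and converging
uniformly to `v`, then all the quantile sets of the `vₙ` are nonempty and the quantiles of
order `p` of the `vₙ` converge to that of `v`. -/
theorem quantile_tendsto_of_dominating (v : ℝ → ℝ) (hmono : Monotone v)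
    (hrc : ∀ x : ℝ, ContinuousWithinAt v (Set.Ici x) x)
    (p : ℝ) (hp : p ∈ Set.Ioo (0 : ℝ) 1)
    (hne : {x : ℝ | 0 ≤ x ∧ p ≤ v x}.Nonempty)
    (vn : ℕ → ℝ → ℝ) (hmono' : ∀ n, Monotone (vn n))
    (hrc' : ∀ n, ∀ x : ℝ, ContinuousWithinAt (vn n) (Set.Ici x) x)
    (hle : ∀ n, ∀ x : ℝ, v x ≤ vn n x)
    (hunif : TendstoUniformly vn v atTop) :
    (∀ n, {x : ℝ | 0 ≤ x ∧ p ≤ vn n x}.Nonempty) ∧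
      Tendsto (fun n => sInf {x : ℝ | 0 ≤ x ∧ p ≤ vn n x}) atTop
        (nhds (sInf {x : ℝ | 0 ≤ x ∧ p ≤ v x})) :=
  quantile_tendsto_of_dominating_general v p hne vn hmono' hle hunif
end

section
/- Let v : ℝ → ℝ be nondecreasing and right-continuous, let p ∈ (0,1), suppose the set {x ≥ 0 : p ≤ v(x)} is nonempty, and set x_p = sInf {x ≥ 0 : p ≤ v(x)}. Assume v is continuous at x_p and strictly increasing at x_p in the sense that v(x) > p for every x > x_p. Let (v_n) be any sequence of nondecreasing right-continuous functions ℝ → ℝ with sup_{x ∈ ℝ} |v_n(x) − v(x)| → 0 as n → ∞. Then for every ε > 0 there exists n₀ such that for all n ≥ n₀ the set {x ≥ 0 : p ≤ v_n(x)} is nonempty and its infimum x_{n,p} satisfies |x_{n,p} − x_p| ≤ ε; i.e. x_{n,p} → x_p. -/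
/-!
Since `v (x_p + ε) > p`, pointwise convergence gives eventually `vₙ (x_p + ε) ≥ p`, so
`x_{n,p} ≤ x_p + ε`. If `x_p - ε ≥ 0`, then `x_p - ε` lies below the infimum `x_p`, so
`v (x_p - ε) < p`; eventually `vₙ (x_p - ε) < p` as well, and by monotonicity of `vₙ` no point
of `[0, x_p - ε]` reaches level `p`, giving `x_p - ε ≤ x_{n,p}`.
-/

open Filter Topology

def quantileSet (f : ℝ → ℝ) (p : ℝ) : Set ℝ := {x | 0 ≤ x ∧ p ≤ f x}

namespace quantileSet

variable {f : ℝ → ℝ} {p : ℝ}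

lemma bddBelow : BddBelow (quantileSet f p) := ⟨0, fun _ hx => hx.1⟩

lemma lt_of_lt_sInf {b : ℝ} (hb : 0 ≤ b) (hlt : b < sInf (quantileSet f p)) : f b < p :=
  lt_of_not_ge fun h => (csInf_le bddBelow ⟨hb, h⟩).not_gt hlt

lemma sInf_mem_Icc (hf : Monotone f) {a b : ℝ} (ha : 0 ≤ a) (hpa : p ≤ f a)
    (hb : b < 0 ∨ f b < p) :
    (quantileSet f p).Nonempty ∧ sInf (quantileSet f p) ∈ Set.Icc b a := by
  have hne : (quantileSet f p).Nonempty := ⟨a, ha, hpa⟩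
  refine ⟨hne, le_csInf hne fun x hx => ?_, csInf_le bddBelow ⟨ha, hpa⟩⟩
  rcases hb with hb | hb
  · exact hb.le.trans hx.1
  · exact le_of_not_gt fun hxb => (hf hxb.le).not_gt (hb.trans_le hx.2)

end quantileSet

theorem quantile_tendsto_of_continuousAt_general (v : ℝ → ℝ) (p : ℝ)
    (xp : ℝ) (hxp : xp = sInf {x : ℝ | 0 ≤ x ∧ p ≤ v x})
    (hstrict : ∀ x : ℝ, xp < x → p < v x)
    (vn : ℕ → ℝ → ℝ) (hmono' : ∀ n, Monotone (vn n))
    (hunif : TendstoUniformly vn v atTop) :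
    ∀ ε > (0 : ℝ), ∃ n₀ : ℕ, ∀ n ≥ n₀,
      {x : ℝ | 0 ≤ x ∧ p ≤ vn n x}.Nonempty ∧
        |sInf {x : ℝ | 0 ≤ x ∧ p ≤ vn n x} - xp| ≤ ε := by
  intro ε hε
  have hxp0 : 0 ≤ xp := hxp ▸ Real.sInf_nonneg fun _ hx => hx.1
  have hup : ∀ᶠ n in atTop, p ≤ vn n (xp + ε) :=
    ((hunif.tendsto_at _).eventually (lt_mem_nhds (hstrict _ (by linarith)))).mono
      fun _ h => h.le
  have hlow : ∀ᶠ n in atTop, xp - ε < 0 ∨ vn n (xp - ε) < p := by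
    rcases lt_or_ge (xp - ε) 0 with hneg | hnonneg
    · exact .of_forall fun _ => .inl hneg
    · have hv : v (xp - ε) < p :=
        quantileSet.lt_of_lt_sInf hnonneg ((sub_lt_self xp hε).trans_eq hxp)
      exact ((hunif.tendsto_at _).eventually (gt_mem_nhds hv)).mono fun _ => .inr
  obtain ⟨n₀, hn₀⟩ := eventually_atTop.1 (hup.and hlow)
  refine ⟨n₀, fun n hn => ?_⟩
  obtain ⟨hne, hmem⟩ :=
    quantileSet.sInf_mem_Icc (hmono' n) (by linarith) (hn₀ n hn).1 (hn₀ n hn).2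
  exact ⟨hne, abs_sub_comm xp _ ▸ Set.mem_Icc_iff_abs_le.2 hmem⟩

/-- Quantile convergence (Theorem 4(b), case (ii), of the paper): if `v` is a nondecreasing
right-continuous function, `p ∈ (0,1)`, the quantile set of `v` is nonempty with infimum
`x_p`, `v` is continuous at `x_p` and strictly increasing at `x_p` (in the sense that
`v x > p` for every `x > x_p`), and `(vₙ)` is any sequence of nondecreasing right-continuous
functions converging uniformly to `v`, then eventually the quantile sets of the `vₙ` are
nonempty and their infima converge to `x_p`. -/
theorem quantile_tendsto_of_continuousAt (v : ℝ → ℝ) (hmono : Monotone v)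
    (hrc : ∀ x : ℝ, ContinuousWithinAt v (Set.Ici x) x)
    (p : ℝ) (hp : p ∈ Set.Ioo (0 : ℝ) 1)
    (hne : {x : ℝ | 0 ≤ x ∧ p ≤ v x}.Nonempty)
    (xp : ℝ) (hxp : xp = sInf {x : ℝ | 0 ≤ x ∧ p ≤ v x})
    (hcont : ContinuousAt v xp)
    (hstrict : ∀ x : ℝ, xp < x → p < v x)
    (vn : ℕ → ℝ → ℝ) (hmono' : ∀ n, Monotone (vn n))
    (hrc' : ∀ n, ∀ x : ℝ, ContinuousWithinAt (vn n) (Set.Ici x) x)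
    (hunif : TendstoUniformly vn v atTop) :
    ∀ ε > (0 : ℝ), ∃ n₀ : ℕ, ∀ n ≥ n₀,
      {x : ℝ | 0 ≤ x ∧ p ≤ vn n x}.Nonempty ∧
        |sInf {x : ℝ | 0 ≤ x ∧ p ≤ vn n x} - xp| ≤ ε :=
  quantile_tendsto_of_continuousAt_general v p xp hxp hstrict vn hmono' hunif
end

section
/- In the coupling setting, let α, α' : ℝ → [0,1] be measurable and let δ ∈ [0,1] satisfy |α(t) − α'(t)| ≤ δ for all t ∈ ℝ. Then the probability of the complement of the agreement event satisfies P(B(α,α')ᶜ) ≤ 1 − E[(1−δ)^N]. -/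
/-!
Condition on `(N, b)`. Since the marks are independent of `(N, b)`, the probability of `B` is the
integral, against the law of `(N, b)`, of the probability that the marks `U 0, …, U (n-1)` avoid the
fixed intervals `Ι (α (β i)) (α' (β i))`. These intervals have length at most `δ`, so each uniform
mark avoids its interval with probability at least `1 - δ`, and by independence of the marks the
integrand is at least `(1 - δ) ^ n`. Integrating gives `P(B) ≥ E[(1 - δ) ^ N]`.
-/

open MeasureTheory ProbabilityTheory
open scoped ENNReal

def agreeEvent {Ω : Type*} (N : Ω → ℕ) (b U : ℕ → Ω → ℝ) (α α' : ℝ → ℝ) : Set Ω :=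
  {ω | ∀ i < N ω,
    U i ω ∉ Set.Ioc (min (α (b i ω)) (α' (b i ω))) (max (α (b i ω)) (α' (b i ω)))}

lemma measurable_pi_lambda_iSup_comap {Ω ι β : Type*} [MeasurableSpace β] (f : ι → Ω → β) :
    Measurable[⨆ i, MeasurableSpace.comap (f i) inferInstance] fun ω i => f i ω :=
  @measurable_pi_lambda _ _ _ (_) _ _ fun i => (comap_measurable (f i)).mono
    (le_iSup (fun j => MeasurableSpace.comap (f j) inferInstance) i) le_rfl

lemma measurableSet_setOf_mem_uIoc {X : Type*} [MeasurableSpace X] {f g h : X → ℝ}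
    (hf : Measurable f) (hg : Measurable g) (hh : Measurable h) :
    MeasurableSet {x | f x ∈ Set.uIoc (g x) (h x)} :=
  (measurableSet_lt (hg.min hh) hf).inter (measurableSet_le hf (hg.max hh))

section Probability

variable {Ω : Type*} [MeasurableSpace Ω] {P : Measure Ω}

lemma indepFun_prodMk_pi_of_indep {ι κ γ β β' : Type*} [MeasurableSpace γ] [MeasurableSpace β]
    [MeasurableSpace β'] {N : Ω → γ} {b : ι → Ω → β} {U : κ → Ω → β'}
    (h : Indep (⨆ i, MeasurableSpace.comap (U i) inferInstance)
      (MeasurableSpace.comap N inferInstance ⊔ ⨆ i, MeasurableSpace.comap (b i) inferInstance) P) :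
    IndepFun (fun ω => (N ω, fun i => b i ω)) (fun ω i => U i ω) P :=
  indep_of_indep_of_le_right
    (indep_of_indep_of_le_left h.symm <| Measurable.comap_le <|
      ((comap_measurable N).mono le_sup_left le_rfl).prodMk
        ((measurable_pi_lambda_iSup_comap b).mono le_sup_right le_rfl))
    (measurable_pi_lambda_iSup_comap U).comap_le

lemma ProbabilityTheory.IndepFun.measure_preimage_eq_lintegral {α β : Type*}
    [MeasurableSpace α] [MeasurableSpace β] [IsFiniteMeasure P] {X : Ω → α} {Y : Ω → β}
    (hXY : IndepFun X Y P) (hX : Measurable X) (hY : Measurable Y) {C : Set (α × β)}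
    (hC : MeasurableSet C) :
    P ((fun ω => (X ω, Y ω)) ⁻¹' C) = ∫⁻ x, P.map Y (Prod.mk x ⁻¹' C) ∂P.map X := by
  rw [← Measure.map_apply (hX.prodMk hY) hC,
    hXY.map_prod_eq_prod_map_map hX.aemeasurable hY.aemeasurable, Measure.prod_apply hC]

lemma ProbabilityTheory.iIndepFun.pow_le_measure_forall_notMem [IsProbabilityMeasure P]
    {ι : Type*} {β : ι → Type*} [∀ i, MeasurableSpace (β i)] {U : ∀ i, Ω → β i}
    (hU : iIndepFun U P) (hUm : ∀ i, Measurable (U i)) {s : ∀ i, Set (β i)}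
    (hs : ∀ i, MeasurableSet (s i)) {ε : ℝ≥0∞} (hε : ∀ i, P (U i ⁻¹' s i) ≤ ε)
    (S : Finset ι) :
    (1 - ε) ^ S.card ≤ P {ω | ∀ i ∈ S, U i ω ∉ s i} := by
  have hinter : {ω | ∀ i ∈ S, U i ω ∉ s i} = ⋂ i ∈ S, U i ⁻¹' (s i)ᶜ := by
    ext ω; simp
  rw [hinter, hU.measure_inter_preimage_eq_mul S fun i _ => (hs i).compl,
    ← Finset.prod_const]
  refine Finset.prod_le_prod' fun i _ => ?_
  rw [Set.preimage_compl, prob_compl_eq_one_sub (hUm i (hs i))]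
  exact tsub_le_tsub_left (hε i) 1

lemma measure_preimage_uIoc_le_of_map_eq_uniform {U : Ω → ℝ} (hU : Measurable U)
    (hUunif : P.map U = volume.restrict (Set.Icc 0 1)) (a b : ℝ) :
    P (U ⁻¹' Set.uIoc a b) ≤ ENNReal.ofReal |b - a| := by
  rw [← Measure.map_apply hU measurableSet_uIoc, hUunif, ← Real.volume_uIoc]
  exact Measure.restrict_apply_le _ _

lemma pow_le_measure_forall_notMem_uIoc [IsProbabilityMeasure P] {U : ℕ → Ω → ℝ}
    (hU : iIndepFun U P) (hUm : ∀ i, Measurable (U i))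
    (hUunif : ∀ i, P.map (U i) = volume.restrict (Set.Icc 0 1))
    {a c : ℕ → ℝ} {δ : ℝ} (hδ : 0 ≤ δ) (hac : ∀ i, |a i - c i| ≤ δ) (n : ℕ) :
    ENNReal.ofReal (1 - δ) ^ n ≤ P {ω | ∀ i < n, U i ω ∉ Set.uIoc (a i) (c i)} := by
  have hε (i : ℕ) : P (U i ⁻¹' Set.uIoc (a i) (c i)) ≤ ENNReal.ofReal δ :=
    (measure_preimage_uIoc_le_of_map_eq_uniform (hUm i) (hUunif i) _ _).trans
      (ENNReal.ofReal_le_ofReal ((abs_sub_comm _ _).trans_le (hac i)))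
  simpa [ENNReal.ofReal_sub, hδ] using
    hU.pow_le_measure_forall_notMem hUm (fun _ => measurableSet_uIoc) hε (Finset.range n)

end Probability

/-- The agreement event is the preimage of this set under `ω ↦ ((N ω, b · ω), U · ω)`. -/
def agreeSet (α α' : ℝ → ℝ) : Set ((ℕ × (ℕ → ℝ)) × (ℕ → ℝ)) :=
  {p | ∀ i < p.1.1, p.2 i ∉ Set.uIoc (α (p.1.2 i)) (α' (p.1.2 i))}

lemma measurableSet_agreeSet {α α' : ℝ → ℝ} (hα : Measurable α) (hα' : Measurable α') :
    MeasurableSet (agreeSet α α') := by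
  simp only [agreeSet, Set.ofPred_forall]
  refine .iInter fun i => .imp (measurable_fst.fst MeasurableSet.of_discrete) ?_
  have hb : Measurable fun p : (ℕ × (ℕ → ℝ)) × (ℕ → ℝ) => p.1.2 i :=
    (measurable_pi_apply i).comp measurable_fst.snd
  exact (measurableSet_setOf_mem_uIoc ((measurable_pi_apply i).comp measurable_snd)
    (hα.comp hb) (hα'.comp hb)).compl

theorem prob_compl_agreeEvent_le_general {Ω : Type*} [MeasurableSpace Ω]
    (P : Measure Ω) [IsProbabilityMeasure P]
    (N : Ω → ℕ) (hN : Measurable N)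
    (b : ℕ → Ω → ℝ) (hb : ∀ i, Measurable (b i))
    (U : ℕ → Ω → ℝ) (hUmeas : ∀ i, Measurable (U i))
    (hUindep : iIndepFun U P)
    (hUunif : ∀ i, P.map (U i) = (volume : Measure ℝ).restrict (Set.Icc 0 1))
    (hUindepNb : Indep (⨆ i, MeasurableSpace.comap (U i) inferInstance)
      (MeasurableSpace.comap N inferInstance ⊔ ⨆ i, MeasurableSpace.comap (b i) inferInstance)
      P)
    (α α' : ℝ → ℝ) (hαm : Measurable α) (hα'm : Measurable α')
    (δ : ℝ) (hδ : δ ∈ Set.Icc (0 : ℝ) 1) (hdiff : ∀ t, |α t - α' t| ≤ δ) :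
    (P (agreeEvent N b U α α')ᶜ).toReal ≤ 1 - ∫ ω, (1 - δ) ^ N ω ∂P := by
  set V : Ω → ℕ × (ℕ → ℝ) := fun ω => (N ω, fun i => b i ω)
  set W : Ω → ℕ → ℝ := fun ω i => U i ω
  have hV : Measurable V := hN.prodMk (measurable_pi_lambda _ hb)
  have hW : Measurable W := measurable_pi_lambda _ hUmeas
  have hC := measurableSet_agreeSet hαm hα'm
  have hB : agreeEvent N b U α α' = (fun ω => (V ω, W ω)) ⁻¹' agreeSet α α' := rfl
  have hlower : ∫⁻ ω, ENNReal.ofReal (1 - δ) ^ N ω ∂P ≤ P (agreeEvent N b U α α') :=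
    calc ∫⁻ ω, ENNReal.ofReal (1 - δ) ^ N ω ∂P
        = ∫⁻ v, ENNReal.ofReal (1 - δ) ^ v.1 ∂P.map V :=
          (lintegral_map (measurable_from_top.comp measurable_fst) hV).symm
      _ ≤ ∫⁻ v, P.map W (Prod.mk v ⁻¹' agreeSet α α') ∂P.map V := lintegral_mono fun v => by
          rw [Measure.map_apply hW (measurable_prodMk_left hC)]
          exact pow_le_measure_forall_notMem_uIoc hUindep hUmeas hUunif hδ.1
            (fun i => hdiff (v.2 i)) v.1
      _ = P (agreeEvent N b U α α') :=
          ((indepFun_prodMk_pi_of_indep hUindepNb).measure_preimage_eq_lintegral hV hW hC).symm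
  have hint : ∫ ω, (1 - δ) ^ N ω ∂P = (∫⁻ ω, ENNReal.ofReal (1 - δ) ^ N ω ∂P).toReal := by
    rw [← integral_toReal (f := fun ω => ENNReal.ofReal (1 - δ) ^ N ω)
      (measurable_from_top.comp hN).aemeasurable
      (.of_forall fun _ => ENNReal.pow_lt_top ENNReal.ofReal_lt_top)]
    simp [ENNReal.toReal_ofReal (sub_nonneg.2 hδ.2)]
  rw [← measureReal_def, probReal_compl_eq_one_sub (hB ▸ (hV.prodMk hW) hC), hint]
  gcongr
  exact ENNReal.toReal_mono (measure_ne_top _ _) hlower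

/-- Quantitative coupling bound: if `|α(t) − α'(t)| ≤ δ` for all `t`, then the probability
of the complement of the agreement event is at most `1 − E[(1−δ)^N]`. -/
theorem prob_compl_agreeEvent_le {Ω : Type*} [MeasurableSpace Ω]
    (P : Measure Ω) [IsProbabilityMeasure P]
    (N : Ω → ℕ) (hN : Measurable N)
    (b : ℕ → Ω → ℝ) (hb : ∀ i, Measurable (b i))
    (U : ℕ → Ω → ℝ) (hUmeas : ∀ i, Measurable (U i))
    (hUindep : iIndepFun U P)
    (hUunif : ∀ i, P.map (U i) = (volume : Measure ℝ).restrict (Set.Icc 0 1))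
    (hUindepNb : Indep (⨆ i, MeasurableSpace.comap (U i) inferInstance)
      (MeasurableSpace.comap N inferInstance ⊔ ⨆ i, MeasurableSpace.comap (b i) inferInstance)
      P)
    (α α' : ℝ → ℝ) (hαm : Measurable α) (hα'm : Measurable α')
    (hα : ∀ t, α t ∈ Set.Icc (0 : ℝ) 1) (hα' : ∀ t, α' t ∈ Set.Icc (0 : ℝ) 1)
    (δ : ℝ) (hδ : δ ∈ Set.Icc (0 : ℝ) 1) (hdiff : ∀ t, |α t - α' t| ≤ δ) :
    (P (agreeEvent N b U α α')ᶜ).toReal ≤ 1 - ∫ ω, (1 - δ) ^ N ω ∂P :=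
  prob_compl_agreeEvent_le_general P N hN b hb U hUmeas hUindep hUunif hUindepNb α α' hαm hα'm δ hδ
    hdiff
end

section
/- In the coupling setting, let X̂ : Ω → ℝ be a nonnegative integrable random variable that is measurable with respect to the σ-algebra generated by N and all the b_i. Then for every ε > 0 there exists η > 0 with the following property: for all measurable α, α' : ℝ → [0,1] with sup_{t∈ℝ} |α(t) − α'(t)| ≤ η, and all measurable X, X' : Ω → ℝ satisfying 0 ≤ X(ω) ≤ X̂(ω) and 0 ≤ X'(ω) ≤ X̂(ω) for all ω, and X(ω) = X'(ω) for every ω in the agreement event B(α,α'), one has |E[X] − E[X']| ≤ ε. (This is the abstract content of the continuity-of-means result, Theorem 2(a) of the paper.) -/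
/-!
`X` and `X'` differ only off the agreement event `B`, so `|E X - E X'| ≤ E[X̂; Bᶜ]`, i.e. the
mass of `Bᶜ` under the measure `ν` with density `X̂`. Now `Bᶜ ⊆ {N > M} ∪ ⋃_{i<M} Fᵢ`, where `Fᵢ`
is the event that `Uᵢ` lies between `α(bᵢ)` and `α'(bᵢ)`. Since `ν` is finite, `ν {N > M}` is
small for a suitable `M`; since `Uᵢ` is uniform and independent of `(bᵢ, X̂)`, Fubini gives
`ν Fᵢ ≤ η · E X̂`. Choosing `M` first and then `η` makes both contributions small.
-/

open MeasureTheory ProbabilityTheory Set Filter Topology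
open scoped ENNReal

lemma measurableSet_mem_Ioc {γ : Type*} [MeasurableSpace γ] {u f g : γ → ℝ}
    (hu : Measurable u) (hf : Measurable f) (hg : Measurable g) :
    MeasurableSet {x | u x ∈ Ioc (f x) (g x)} :=
  (measurableSet_lt hf hu).inter (measurableSet_le hu hg)

lemma volume_Ioc_min_max_le {a a' η : ℝ} (h : |a - a'| ≤ η) :
    volume (Ioc (min a a') (max a a')) ≤ ENNReal.ofReal η := by
  rw [Real.volume_Ioc, max_sub_min_eq_abs, abs_sub_comm]
  exact ENNReal.ofReal_le_ofReal h

lemma tendsto_measure_lt_atTop {Ω : Type*} [MeasurableSpace Ω] {μ : Measure Ω}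
    [IsFiniteMeasure μ] {N : Ω → ℕ} (hN : Measurable N) :
    Tendsto (fun M : ℕ => μ {ω | M < N ω}) atTop (𝓝 0) := by
  have h := tendsto_measure_iInter_atTop (μ := μ) (s := fun M : ℕ => {ω | M < N ω})
    (fun _ => (hN measurableSet_Ioi).nullMeasurableSet)
    (fun _ _ hMK _ hω => hMK.trans_lt hω) ⟨0, measure_ne_top _ _⟩
  have hempty : (⋂ M : ℕ, {ω | M < N ω}) = ∅ :=
    iInter_eq_empty_iff.2 fun ω => ⟨N ω, lt_irrefl (N ω)⟩
  rwa [hempty, measure_empty] at h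

lemma indepFun_of_indep_iSup_comap {Ω ι β γ : Type*} [MeasurableSpace Ω] [MeasurableSpace β]
    [MeasurableSpace γ] {P : Measure Ω} {U : ι → Ω → β} {m : MeasurableSpace Ω} {V : Ω → γ}
    (h : Indep (⨆ i, MeasurableSpace.comap (U i) inferInstance) m P) (hV : Measurable[m] V)
    (i : ι) : IndepFun (U i) V P :=
  indep_of_indep_of_le_right
    (indep_of_indep_of_le_left h (le_iSup (fun j => MeasurableSpace.comap (U j) inferInstance) i))
    hV.comap_le

lemma setLIntegral_mem_le_of_indepFun {Ω β : Type*} [MeasurableSpace Ω] [MeasurableSpace β]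
    {P : Measure Ω} [IsFiniteMeasure P] {u : Ω → ℝ} {V : Ω → β} (hu : Measurable u)
    (hV : Measurable V) (hind : IndepFun u V P) (hlaw : P.map u ≤ volume) {S : β → Set ℝ}
    (hS : MeasurableSet {p : ℝ × β | p.1 ∈ S p.2}) {δ : ℝ≥0∞} (hSδ : ∀ v, volume (S v) ≤ δ)
    {w : β → ℝ≥0∞} (hw : Measurable w) :
    ∫⁻ ω in {ω | u ω ∈ S (V ω)}, w (V ω) ∂P ≤ δ * ∫⁻ ω, w (V ω) ∂P := by
  set F : ℝ × β → ℝ≥0∞ := {p | p.1 ∈ S p.2}.indicator fun p => w p.2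
  have hF : Measurable F := (hw.comp measurable_snd).indicator hS
  have hlaw_pair := (indepFun_iff_map_prod_eq_prod_map_map hu.aemeasurable hV.aemeasurable).1 hind
  have hsection : ∀ v, ∫⁻ x, F (x, v) ∂(P.map u) ≤ δ * w v := fun v =>
    calc ∫⁻ x, F (x, v) ∂(P.map u) ≤ w v * P.map u (S v) := lintegral_indicator_const_le _ _
      _ ≤ w v * δ := by gcongr; exact (Measure.le_iff'.1 hlaw _).trans (hSδ v)
      _ = δ * w v := mul_comm _ _
  calc ∫⁻ ω in {ω | u ω ∈ S (V ω)}, w (V ω) ∂P = ∫⁻ ω, F (u ω, V ω) ∂P := by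
        have hE : MeasurableSet {ω | u ω ∈ S (V ω)} := hS.preimage (hu.prodMk hV)
        rw [← lintegral_indicator hE]
        rfl
    _ = ∫⁻ v, ∫⁻ x, F (x, v) ∂(P.map u) ∂(P.map V) := by
        rw [← lintegral_map hF (hu.prodMk hV), hlaw_pair, lintegral_prod_symm _ hF.aemeasurable]
    _ ≤ ∫⁻ v, δ * w v ∂(P.map V) := lintegral_mono hsection
    _ = δ * ∫⁻ ω, w (V ω) ∂P := by rw [lintegral_const_mul _ hw, lintegral_map hw hV]

lemma abs_integral_sub_le_withDensity_compl {Ω : Type*} [MeasurableSpace Ω] {P : Measure Ω}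
    [IsFiniteMeasure P] {X X' Xhat : Ω → ℝ} {B : Set Ω} (hX : Integrable X P)
    (hX' : Integrable X' P) (hXhat : Integrable Xhat P) (hle : ∀ ω, |X ω - X' ω| ≤ Xhat ω)
    (heq : ∀ ω ∈ B, X ω = X' ω) :
    |∫ ω, X ω ∂P - ∫ ω, X' ω ∂P| ≤ (P.withDensity (fun ω => ENNReal.ofReal (Xhat ω)) Bᶜ).toReal :=
  calc |∫ ω, X ω ∂P - ∫ ω, X' ω ∂P| = |∫ ω in Bᶜ, (X ω - X' ω) ∂P| := by
        rw [← integral_sub hX hX', setIntegral_eq_integral_of_forall_compl_eq_zero (s := Bᶜ)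
          fun ω hω => sub_eq_zero.2 (heq ω (not_not.1 hω))]
    _ ≤ ∫ ω in Bᶜ, |X ω - X' ω| ∂P := abs_integral_le_integral_abs
    _ ≤ ∫ ω in Bᶜ, Xhat ω ∂P := integral_mono (hX.sub hX').abs.restrict hXhat.restrict hle
    _ = _ := by
        rw [integral_eq_lintegral_of_nonneg_ae (.of_forall fun ω => (abs_nonneg _).trans (hle ω))
          hXhat.restrict.aestronglyMeasurable, withDensity_apply']

section Coupling

variable {Ω : Type*} {N : Ω → ℕ} {b U : ℕ → Ω → ℝ} {α α' : ℝ → ℝ}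

/-- The `i`-th child is pruned in exactly one of the two coupled processes. -/
def flipEvent (b U : ℕ → Ω → ℝ) (α α' : ℝ → ℝ) (i : ℕ) : Set Ω :=
  {ω | U i ω ∈ Ioc (min (α (b i ω)) (α' (b i ω))) (max (α (b i ω)) (α' (b i ω)))}

lemma compl_agreeEvent_subset (M : ℕ) :
    (agreeEvent N b U α α')ᶜ ⊆ {ω | M < N ω} ∪ ⋃ i ∈ Finset.range M, flipEvent b U α α' i := by
  intro ω hω
  simp only [agreeEvent, mem_compl_iff, mem_ofPred_eq, not_forall, not_not] at hω
  obtain ⟨i, hiN, hflip⟩ := hω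
  rcases lt_or_ge M (N ω) with hM | hM
  · exact Or.inl hM
  · exact Or.inr (mem_biUnion (Finset.mem_range.2 (hiN.trans_le hM)) hflip)

variable [MeasurableSpace Ω] {P : Measure Ω} [IsFiniteMeasure P] {Xhat : Ω → ℝ}

lemma withDensity_flipEvent_le {i : ℕ}
    (hb : Measurable (b i)) (hU : Measurable (U i)) (hUlaw : P.map (U i) ≤ volume)
    (hXhat : Measurable Xhat) (hind : IndepFun (U i) (fun ω => (b i ω, Xhat ω)) P)
    (hα : Measurable α) (hα' : Measurable α') {η : ℝ} (hαη : ∀ t, |α t - α' t| ≤ η) :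
    P.withDensity (fun ω => ENNReal.ofReal (Xhat ω)) (flipEvent b U α α' i) ≤
      ENNReal.ofReal η * ∫⁻ ω, ENNReal.ofReal (Xhat ω) ∂P := by
  have hαfst : Measurable fun p : ℝ × (ℝ × ℝ) => α p.2.1 :=
    hα.comp (measurable_fst.comp measurable_snd)
  have hα'fst : Measurable fun p : ℝ × (ℝ × ℝ) => α' p.2.1 :=
    hα'.comp (measurable_fst.comp measurable_snd)
  rw [withDensity_apply']
  exact setLIntegral_mem_le_of_indepFun hU (hb.prodMk hXhat) hind hUlaw
    (S := fun v => Ioc (min (α v.1) (α' v.1)) (max (α v.1) (α' v.1)))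
    (measurableSet_mem_Ioc measurable_fst (hαfst.min hα'fst) (hαfst.max hα'fst))
    (fun v => volume_Ioc_min_max_le (hαη v.1)) (w := fun v => ENNReal.ofReal v.2)
    measurable_snd.ennreal_ofReal

lemma withDensity_compl_agreeEvent_le
    (hb : ∀ i, Measurable (b i)) (hU : ∀ i, Measurable (U i))
    (hUlaw : ∀ i, P.map (U i) ≤ volume) (hXhat : Measurable Xhat)
    (hind : ∀ i, IndepFun (U i) (fun ω => (b i ω, Xhat ω)) P)
    (hα : Measurable α) (hα' : Measurable α') {η : ℝ} (hαη : ∀ t, |α t - α' t| ≤ η) (M : ℕ) :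
    P.withDensity (fun ω => ENNReal.ofReal (Xhat ω)) (agreeEvent N b U α α')ᶜ ≤
      P.withDensity (fun ω => ENNReal.ofReal (Xhat ω)) {ω | M < N ω} +
        M * (ENNReal.ofReal η * ∫⁻ ω, ENNReal.ofReal (Xhat ω) ∂P) := by
  set ν := P.withDensity fun ω => ENNReal.ofReal (Xhat ω)
  calc ν (agreeEvent N b U α α')ᶜ
      ≤ ν ({ω | M < N ω} ∪ ⋃ i ∈ Finset.range M, flipEvent b U α α' i) :=
        measure_mono (compl_agreeEvent_subset M)
    _ ≤ ν {ω | M < N ω} + ∑ i ∈ Finset.range M, ν (flipEvent b U α α' i) :=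
        (measure_union_le _ _).trans (add_le_add_right (measure_biUnion_finset_le _ _) _)
    _ ≤ ν {ω | M < N ω} +
          ∑ _i ∈ Finset.range M, ENNReal.ofReal η * ∫⁻ ω, ENNReal.ofReal (Xhat ω) ∂P := by
        gcongr with i
        exact withDensity_flipEvent_le (hb i) (hU i) (hUlaw i) hXhat (hind i) hα hα' hαη
    _ = _ := by rw [Finset.sum_const, Finset.card_range, nsmul_eq_mul]

end Coupling

theorem abs_integral_sub_le_of_agree_general {Ω : Type*} [MeasurableSpace Ω]
    (P : Measure Ω) [IsProbabilityMeasure P]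
    (N : Ω → ℕ) (hN : Measurable N)
    (b : ℕ → Ω → ℝ) (hb : ∀ i, Measurable (b i))
    (U : ℕ → Ω → ℝ) (hUmeas : ∀ i, Measurable (U i))
    (hUunif : ∀ i, P.map (U i) = (volume : Measure ℝ).restrict (Set.Icc 0 1))
    (hUindepNb : Indep (⨆ i, MeasurableSpace.comap (U i) inferInstance)
      (MeasurableSpace.comap N inferInstance ⊔ ⨆ i, MeasurableSpace.comap (b i) inferInstance)
      P)
    (Xhat : Ω → ℝ)
    (hXhatmeas : Measurable[MeasurableSpace.comap N inferInstance ⊔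
      ⨆ i, MeasurableSpace.comap (b i) inferInstance] Xhat)
    (hXhatint : Integrable Xhat P) :
    ∀ ε > (0 : ℝ), ∃ η > (0 : ℝ),
      ∀ (α α' : ℝ → ℝ), Measurable α → Measurable α' →
        (∀ t, α t ∈ Set.Icc (0 : ℝ) 1) → (∀ t, α' t ∈ Set.Icc (0 : ℝ) 1) →
        (∀ t, |α t - α' t| ≤ η) →
        ∀ (X X' : Ω → ℝ), Measurable X → Measurable X' →
          (∀ ω, 0 ≤ X ω ∧ X ω ≤ Xhat ω) → (∀ ω, 0 ≤ X' ω ∧ X' ω ≤ Xhat ω) →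
          (∀ ω ∈ agreeEvent N b U α α', X ω = X' ω) →
          |∫ ω, X ω ∂P - ∫ ω, X' ω ∂P| ≤ ε := by
  intro ε hε
  set ν := P.withDensity fun ω => ENNReal.ofReal (Xhat ω)
  have : IsFiniteMeasure ν := isFiniteMeasure_withDensity_ofReal hXhatint.2
  have hXhat : Measurable Xhat :=
    hXhatmeas.mono (sup_le hN.comap_le (iSup_le fun i => (hb i).comap_le)) le_rfl
  have hind i : IndepFun (U i) (fun ω => (b i ω, Xhat ω)) P := by
    refine indepFun_of_indep_iSup_comap hUindepNb (Measurable.prodMk ?_ hXhatmeas) i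
    exact (Measurable.of_comap_le (le_iSup (fun j => MeasurableSpace.comap (b j) _) i)).mono
      le_sup_right le_rfl
  have hε2 : 0 < ENNReal.ofReal (ε / 2) := ENNReal.ofReal_pos.2 (half_pos hε)
  obtain ⟨M, hM⟩ := ((tendsto_measure_lt_atTop (μ := ν) hN).eventually (gt_mem_nhds hε2)).exists
  obtain ⟨η, hη, hηM⟩ := ENNReal.exists_nnreal_pos_mul_lt
    (ENNReal.mul_ne_top (ENNReal.natCast_ne_top M) hXhatint.lintegral_lt_top.ne) hε2.ne'
  refine ⟨η, hη, fun α α' hα hα' _ _ hαη X X' hX hX' hXb hX'b hagree => ?_⟩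
  have hXint : Integrable X P := hXhatint.mono' hX.aestronglyMeasurable
    (.of_forall fun ω => (Real.norm_of_nonneg (hXb ω).1).trans_le (hXb ω).2)
  have hX'int : Integrable X' P := hXhatint.mono' hX'.aestronglyMeasurable
    (.of_forall fun ω => (Real.norm_of_nonneg (hX'b ω).1).trans_le (hX'b ω).2)
  have hle ω : |X ω - X' ω| ≤ Xhat ω :=
    abs_sub_le_of_nonneg_of_le (hXb ω).1 (hXb ω).2 (hX'b ω).1 (hX'b ω).2
  refine (abs_integral_sub_le_withDensity_compl hXint hX'int hXhatint hle hagree).trans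
    (ENNReal.toReal_le_of_le_ofReal hε.le ?_)
  calc ν (agreeEvent N b U α α')ᶜ
      ≤ ν {ω | M < N ω} + M * (ENNReal.ofReal η * ∫⁻ ω, ENNReal.ofReal (Xhat ω) ∂P) :=
        withDensity_compl_agreeEvent_le hb hUmeas
          (fun i => (hUunif i).trans_le Measure.restrict_le_self) hXhat hind hα hα' hαη M
    _ ≤ ENNReal.ofReal (ε / 2) + ENNReal.ofReal (ε / 2) := by
        rw [ENNReal.ofReal_coe_nnreal, mul_left_comm]
        exact add_le_add hM.le hηM.le
    _ = ENNReal.ofReal ε := by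
        rw [← ENNReal.ofReal_add (half_pos hε).le (half_pos hε).le, add_halves]

/-- Continuity of means (abstract content of Theorem 2(a) of the paper): if `X̂` is a
nonnegative integrable random variable measurable with respect to the σ-algebra generated
by `N` and the `bᵢ`, then for every `ε > 0` there is `η > 0` such that any two random
variables dominated by `X̂` which agree on the agreement event `B(α,α')`, for vaccination
functions `α, α'` that are uniformly within `η` of each other, have means within `ε`. -/
theorem abs_integral_sub_le_of_agree {Ω : Type*} [MeasurableSpace Ω]
    (P : Measure Ω) [IsProbabilityMeasure P]
    (N : Ω → ℕ) (hN : Measurable N)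
    (b : ℕ → Ω → ℝ) (hb : ∀ i, Measurable (b i))
    (U : ℕ → Ω → ℝ) (hUmeas : ∀ i, Measurable (U i))
    (hUindep : iIndepFun U P)
    (hUunif : ∀ i, P.map (U i) = (volume : Measure ℝ).restrict (Set.Icc 0 1))
    (hUindepNb : Indep (⨆ i, MeasurableSpace.comap (U i) inferInstance)
      (MeasurableSpace.comap N inferInstance ⊔ ⨆ i, MeasurableSpace.comap (b i) inferInstance)
      P)
    (Xhat : Ω → ℝ)
    (hXhatmeas : Measurable[MeasurableSpace.comap N inferInstance ⊔
      ⨆ i, MeasurableSpace.comap (b i) inferInstance] Xhat)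
    (hXhatpos : ∀ ω, 0 ≤ Xhat ω) (hXhatint : Integrable Xhat P) :
    ∀ ε > (0 : ℝ), ∃ η > (0 : ℝ),
      ∀ (α α' : ℝ → ℝ), Measurable α → Measurable α' →
        (∀ t, α t ∈ Set.Icc (0 : ℝ) 1) → (∀ t, α' t ∈ Set.Icc (0 : ℝ) 1) →
        (∀ t, |α t - α' t| ≤ η) →
        ∀ (X X' : Ω → ℝ), Measurable X → Measurable X' →
          (∀ ω, 0 ≤ X ω ∧ X ω ≤ Xhat ω) → (∀ ω, 0 ≤ X' ω ∧ X' ω ≤ Xhat ω) →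
          (∀ ω ∈ agreeEvent N b U α α', X ω = X' ω) →
          |∫ ω, X ω ∂P - ∫ ω, X' ω ∂P| ≤ ε :=
  abs_integral_sub_le_of_agree_general P N hN b hb U hUmeas hUunif hUindepNb Xhat hXhatmeas hXhatint
end

section
/- Let (Ω, 𝓕, P) be a probability space, let T : Ω → [0,∞] be measurable, and let (B_n)_{n∈ℕ} and (I_n)_{n∈ℕ} be sequences of real-valued random variables such that, for each n, I_n is independent of B_n and the law of I_n has no atoms. Suppose that for every t > 0, almost surely, T = t implies that B_n + I_n = t for some n ∈ ℕ. Then P(T = t) = 0 for every t > 0, and consequently the distribution function t ↦ P(T ≤ t) is continuous on (0, ∞). (This is the abstract content of Theorem 5 of the paper: if the lifetime random variable of the branching process is continuous, then the distribution function v_α of the time to extinction T_α is continuous, since the extinction time can only equal a death time B_n + I_n.) -/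
/-!
Since `Iₙ` is independent of `Bₙ`, the law of `Bₙ + Iₙ` is the convolution of their laws, which
has no atoms because the law of `Iₙ` has none. Hence, for `t > 0`, the event `T = t` is almost
surely covered by the countably many null events `Bₙ + Iₙ = t`. The distribution function of `T`
is continuous from the right by continuity of measures from above, and from the left because
`P(T < t) = P(T ≤ t)` when `T` has no atom at `t`.
-/

open MeasureTheory ProbabilityTheory
open scoped ENNReal
open Filter Set Topology

namespace MeasureTheory

variable {α : Type*} {_ : MeasurableSpace α} {μ : Measure α}

namespace Measure

@[to_additive]
instance nullSingletonClass_mconv {G : Type*} [Group G] [MeasurableSpace G] [MeasurableMul₂ G]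
    [MeasurableSingletonClass G] (μ ν : Measure G) [SFinite ν] [NullSingletonClass ν] :
    NullSingletonClass (μ ∗ₘ ν) := by
  refine ⟨fun t ↦ ?_⟩
  have hfiber : ∀ x : G, (x * ·) ⁻¹' {t} = {x⁻¹ * t} := fun x ↦ by
    ext y
    simp [eq_inv_mul_iff_mul_eq]
  rw [mconv, map_apply measurable_mul (measurableSet_singleton t),
    prod_apply (measurable_mul (measurableSet_singleton t))]
  simp [preimage_preimage, hfiber]

end Measure

theorem tendsto_measure_biUnion_lt {ι : Type*} [LinearOrder ι] [TopologicalSpace ι]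
    [OrderTopology ι] [FirstCountableTopology ι] {s : ι → Set α} {a : ι}
    (hm : ∀ i j, i ≤ j → j < a → s i ⊆ s j) :
    Tendsto (μ ∘ s) (𝓝[<] a) (𝓝 (μ (⋃ r < a, s r))) := by
  by_cases ha : Order.IsSuccPrelimit a
  · have : (atTop : Filter (Iio a)).IsCountablyGenerated := by
      rw [← comap_coe_Iio_nhdsLT a ha]
      infer_instance
    simp_rw [← map_coe_Iio_atTop a ha, tendsto_map'_iff, ← mem_Iio, biUnion_eq_iUnion]
    exact tendsto_measure_iUnion_atTop fun i j h ↦ hm i j h j.2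
  · rw [Order.not_isSuccPrelimit_iff] at ha
    rcases ha with ⟨b, hba⟩
    simp [hba.nhdsLT]

theorem continuousAt_measure_Iic [LinearOrder α] [TopologicalSpace α] [OrderTopology α]
    [DenselyOrdered α] [FirstCountableTopology α] [OpensMeasurableSpace α] [IsFiniteMeasure μ]
    {a : α} (ha : μ {a} = 0) : ContinuousAt (fun x ↦ μ (Iic x)) a := by
  refine continuousAt_iff_continuous_left_right.2 ⟨?_, ?_⟩
  · rw [← continuousWithinAt_Iio_iff_Iic, ContinuousWithinAt,
      ← measure_congr (Iio_ae_eq_Iic' ha)]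
    have hIio : ⋃ r < a, Iic r = Iio a :=
      Subset.antisymm (iUnion₂_subset fun r hr _ hx ↦ lt_of_le_of_lt hx hr)
        fun x hx ↦ mem_biUnion hx (le_refl x)
    have := tendsto_measure_biUnion_lt (μ := μ) (a := a) fun i j h _ ↦ Iic_subset_Iic.2 h
    rwa [hIio] at this
  · rw [← continuousWithinAt_Ioi_iff_Ici, ContinuousWithinAt]
    refine .of_neBot_imp fun hne ↦ ?_
    obtain ⟨r, hr⟩ := hne.nonempty_of_mem self_mem_nhdsWithin
    have hIic : ⋂ r > a, Iic r = Iic a := by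
      ext x
      simp only [mem_iInter, mem_Iic]
      exact ⟨fun h ↦ le_of_forall_gt_imp_ge_of_dense h, fun h r hr ↦ h.trans hr.le⟩
    rw [← hIic]
    exact tendsto_measure_biInter_gt (fun r _ ↦ measurableSet_Iic.nullMeasurableSet)
      (fun i j _ h ↦ Iic_subset_Iic.2 h) ⟨r, hr, measure_ne_top μ _⟩

end MeasureTheory

theorem ProbabilityTheory.IndepFun.nullSingletonClass_map_add {Ω E : Type*} [MeasurableSpace Ω]
    {μ : Measure Ω} [IsFiniteMeasure μ] [AddGroup E] [MeasurableSpace E] [MeasurableAdd₂ E]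
    [MeasurableSingletonClass E] {f g : Ω → E} (hf : Measurable f) (hg : Measurable g)
    (hfg : f ⟂ᵢ[μ] g) [NullSingletonClass (μ.map g)] : NullSingletonClass (μ.map (f + g)) := by
  rw [hfg.map_add_eq_map_conv_map hf hg]
  infer_instance

/-- Abstract content of Theorem 5 of the paper: if a measurable random time
`T : Ω → [0,∞]` can, for every `t > 0`, only equal `t` when some death time `Bₙ + Iₙ`
equals `t` (almost surely), where each lifetime `Iₙ` is independent of the birth time `Bₙ`
and has atomless law, then `P(T = t) = 0` for every `t > 0` and the distribution function
`t ↦ P(T ≤ t)` is continuous on `(0, ∞)`. -/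
theorem extinctionTime_cdf_continuous {Ω : Type*} [MeasurableSpace Ω]
    (P : Measure Ω) [IsProbabilityMeasure P]
    (T : Ω → ℝ≥0∞) (hT : Measurable T)
    (B I : ℕ → Ω → ℝ) (hB : ∀ n, Measurable (B n)) (hI : ∀ n, Measurable (I n))
    (hindep : ∀ n, IndepFun (B n) (I n) P)
    (hatoms : ∀ n, ∀ t : ℝ, P.map (I n) {t} = 0)
    (hdeath : ∀ t : ℝ, 0 < t →
      ∀ᵐ ω ∂P, T ω = ENNReal.ofReal t → ∃ n : ℕ, B n ω + I n ω = t) :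
    (∀ t : ℝ, 0 < t → P {ω | T ω = ENNReal.ofReal t} = 0) ∧
      ContinuousOn (fun t : ℝ => (P {ω | T ω ≤ ENNReal.ofReal t}).toReal) (Set.Ioi 0) := by
  have hdeath_null : ∀ n t, P {ω | B n ω + I n ω = t} = 0 := fun n t ↦ by
    have : NullSingletonClass (P.map (I n)) := ⟨hatoms n⟩
    have := (hindep n).nullSingletonClass_map_add (hB n) (hI n)
    rw [← measure_singleton (μ := P.map (B n + I n)) t,
      Measure.map_apply ((hB n).add (hI n)) (measurableSet_singleton t)]
    rfl
  have hno_atom : ∀ t : ℝ, 0 < t → P {ω | T ω = ENNReal.ofReal t} = 0 := fun t ht ↦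
    measure_mono_null_ae (by filter_upwards [hdeath t ht] with ω h hω using mem_iUnion.2 (h hω))
      (measure_iUnion_null fun n ↦ hdeath_null n t)
  refine ⟨hno_atom, fun t ht ↦ ContinuousAt.continuousWithinAt ?_⟩
  have hlaw : ∀ s, P {ω | T ω ≤ s} = P.map T (Iic s) := fun s ↦
    (Measure.map_apply hT measurableSet_Iic).symm
  have hlaw_atom : P.map T {ENNReal.ofReal t} = 0 := by
    rw [Measure.map_apply hT (measurableSet_singleton _)]
    exact hno_atom t ht
  simp_rw [hlaw]
  have hcdf : ContinuousAt (fun s : ℝ ↦ P.map T (Iic (ENNReal.ofReal s))) t :=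
    (continuousAt_measure_Iic hlaw_atom).comp ENNReal.continuous_ofReal.continuousAt
  exact (ENNReal.tendsto_toReal (measure_ne_top _ _)).comp hcdf
end
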